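/- arXiv:2509.16142 — 2 statements merged into one kernel-verified Lean document; each statement's English description precedes it below -/
import Mathlib

section
/- Let F be a finite field with q elements, q odd, A = F[T], m ∈ A monic of odd degree M ≥ 3, and M' = (M−1)/2. Let χ : A → ℤ be completely multiplicative with χ(f) = 0 whenever f is not coprime to m and χ(f)² = 1 whenever f is coprime to m. Set c(n) = ∑_{f monic, deg f = n} χ(f) and b^μ(n) = ∑_{f monic, deg f = n} μ(f)χ(f). Suppose there are pairwise distinct θ_1, …, θ_{M'} ∈ (0, π) such that c(n) = 0 for all n ≥ M and, as polynomials with real coefficients, ∑_{n=0}^{M−1} c(n) X^n = ∏_{j=1}^{M'} (1 − 2√q·cos(θ_j)·X + q X²). Then there exist real numbers γ_1, …, γ_{M'} and φ_1, …, φ_{M'} such that for every n ≥ 1, b^μ(n) = q^{n/2} ∑_{j=1}^{M'} γ_j sin(nθ_j + φ_j). -/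
/-!
Summing `μ(d)` over the monic divisors of a monic `f` of positive degree gives `0` (group the
squarefree divisors by the subsets of the prime factors of `f`), so for completely multiplicative
`χ` the series `∑ b^μ(n) u^n` is the inverse of `ℒ(u, χ) = ∑ c(n) uⁿ`. Over `ℂ` the hypothesis
splits `ℒ(u, χ)` as `∏ (1 - β u)` over the `2M'` pairwise distinct numbers `β = √q e^{±iθ_j}`, and
partial fractions (Lagrange interpolation at the nodes `β⁻¹`) give `b^μ(n) = ∑ A_β βⁿ`. Taking
real parts, the two terms belonging to `θ_j` combine into `q^{n/2} |w_j| cos (nθ_j + arg w_j)`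
with `w_j = A_{β_j} + conj A_{conj β_j}`.
-/

open Polynomial
open scoped Classical

noncomputable def polyMoebius {F : Type*} [Field F] (f : F[X]) : ℤ :=
  if Squarefree f then (-1) ^ Multiset.card (UniqueFactorizationMonoid.factors f) else 0

noncomputable def polyLiouville {F : Type*} [Field F] (f : F[X]) : ℤ :=
  (-1) ^ Multiset.card (UniqueFactorizationMonoid.factors f)

noncomputable def coeffSum {F : Type*} [Field F] (w : F[X] → ℤ) (n : ℕ) : ℤ :=
  ∑ᶠ f ∈ {f : F[X] | f.Monic ∧ f.natDegree = n}, w f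

open Finset UniqueFactorizationMonoid

namespace Polynomial

section Field

variable {F : Type*} [Field F]

theorem normalizedFactors_prod_of_irreducible_monic {T : Finset F[X]}
    (hT : ∀ p ∈ T, Irreducible p ∧ p.Monic) : normalizedFactors (∏ p ∈ T, p) = T.val := by
  rw [Finset.prod_eq_multiset_prod, Multiset.map_id',
    normalizedFactors_prod_eq _ fun p hp => (hT p hp).1,
    Multiset.map_congr rfl fun p hp => (hT p hp).2.normalize_eq_self, Multiset.map_id']

theorem irreducible_monic_of_mem_primeFactors {f p : F[X]} (hp : p ∈ primeFactors f) :
    Irreducible p ∧ p.Monic := by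
  have hf : f ≠ 0 := by rintro rfl; simp at hp
  obtain ⟨hirr, hmon, -⟩ := (Polynomial.mem_normalizedFactors_iff hf).mp (mem_primeFactors.mp hp)
  exact ⟨hirr, hmon⟩

theorem monic_radical (f : F[X]) : (radical f).Monic :=
  monic_prod_of_monic _ _ fun _ hp => (irreducible_monic_of_mem_primeFactors hp).2

theorem radical_eq_self_of_squarefree {d : F[X]} (hd : d.Monic) (hsq : Squarefree d) :
    radical d = d :=
  eq_of_monic_of_associated (monic_radical d) hd (radical_associated hsq.isRadical hd.ne_zero)

end Field

section FiniteField

variable {F : Type*} [Field F] [Fintype F]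

theorem finite_setOf_monic_natDegree_eq (n : ℕ) :
    {f : F[X] | f.Monic ∧ f.natDegree = n}.Finite := by
  have : Finite (degreeLT F (n + 1)) := .of_equiv _ (degreeLTEquiv F (n + 1)).toEquiv.symm
  refine (Set.finite_coe_iff.mp this).subset fun f hf => mem_degreeLT.mpr ?_
  exact degree_le_natDegree.trans_lt (by exact_mod_cast hf.2.trans_lt n.lt_succ_self)

variable (F) in
noncomputable def monicsOfDegree (n : ℕ) : Finset F[X] :=
  (finite_setOf_monic_natDegree_eq n).toFinset

@[simp]
theorem mem_monicsOfDegree {n : ℕ} {f : F[X]} :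
    f ∈ monicsOfDegree F n ↔ f.Monic ∧ f.natDegree = n :=
  Set.Finite.mem_toFinset _

theorem monicsOfDegree_zero : monicsOfDegree F 0 = {1} := by
  ext f
  simp only [mem_monicsOfDegree, mem_singleton]
  exact ⟨fun ⟨hf, h0⟩ => hf.natDegree_eq_zero.mp h0,
    by rintro rfl; exact ⟨monic_one, natDegree_one⟩⟩

noncomputable def monicDivisors (f : F[X]) : Finset F[X] :=
  ((range (f.natDegree + 1)).biUnion (monicsOfDegree F)).filter (· ∣ f)

theorem mem_monicDivisors {f d : F[X]} (hf : f ≠ 0) :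
    d ∈ monicDivisors f ↔ d.Monic ∧ d ∣ f := by
  simp only [monicDivisors, mem_filter, mem_biUnion, mem_range, mem_monicsOfDegree]
  exact ⟨fun ⟨⟨_, _, hd, _⟩, hdf⟩ => ⟨hd, hdf⟩,
    fun ⟨hd, hdf⟩ => ⟨⟨_, Nat.lt_succ_of_le (natDegree_le_of_dvd hdf hf), hd, rfl⟩, hdf⟩⟩

theorem filter_squarefree_monicDivisors {f : F[X]} (hf : f ≠ 0) :
    (monicDivisors f).filter Squarefree = (primeFactors f).powerset.image (∏ p ∈ ·, p) := by
  ext d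
  simp only [mem_filter, mem_monicDivisors hf, mem_image, mem_powerset]
  constructor
  · rintro ⟨⟨hd, hdf⟩, hsq⟩
    refine ⟨primeFactors d, ?_, radical_eq_self_of_squarefree hd hsq⟩
    exact radical_dvd_radical_iff_primeFactors_subset_primeFactors.mp
      (radical_dvd_radical hdf hf)
  · rintro ⟨T, hT, rfl⟩
    have hTf : ∏ p ∈ T, p ∣ radical f := prod_dvd_prod_of_subset _ _ id hT
    exact ⟨⟨monic_prod_of_monic _ _ fun p hp => (irreducible_monic_of_mem_primeFactors (hT hp)).2,
      hTf.trans radical_dvd_self⟩, squarefree_radical.squarefree_of_dvd hTf⟩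

end FiniteField

end Polynomial

section Moebius

variable {F : Type*} [Field F]

theorem polyMoebius_of_squarefree {f : F[X]} (hf : Squarefree f) :
    polyMoebius f = (-1) ^ Multiset.card (normalizedFactors f) := by
  rw [polyMoebius, if_pos hf, normalizedFactors, Multiset.card_map]

theorem polyMoebius_one : polyMoebius (1 : F[X]) = 1 := by
  rw [polyMoebius_of_squarefree squarefree_one, normalizedFactors_one, Multiset.card_zero,
    pow_zero]

theorem sum_polyMoebius_monicDivisors [Fintype F] {f : F[X]} (hf : f.Monic)
    (hdeg : f.natDegree ≠ 0) : ∑ d ∈ monicDivisors f, polyMoebius d = 0 := by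
  have hirr : ∀ T ∈ (primeFactors f).powerset, ∀ p ∈ T, Irreducible p ∧ p.Monic :=
    fun T hT p hp => irreducible_monic_of_mem_primeFactors (mem_powerset.mp hT hp)
  rw [← sum_filter_of_ne (f := polyMoebius) (p := Squarefree)
      fun d _ h => by_contra fun hsq => h (if_neg hsq),
    filter_squarefree_monicDivisors hf.ne_zero, sum_image fun T hT T' hT' h => val_injective <| by
      rw [← normalizedFactors_prod_of_irreducible_monic (hirr T hT), h,
        normalizedFactors_prod_of_irreducible_monic (hirr T' hT')]]
  calc ∑ T ∈ (primeFactors f).powerset, polyMoebius (∏ p ∈ T, p)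
      = ∑ T ∈ (primeFactors f).powerset, (-1) ^ #T := by
        refine sum_congr rfl fun T hT => ?_
        have hsq : Squarefree (∏ p ∈ T, p) := squarefree_radical.squarefree_of_dvd
          (prod_dvd_prod_of_subset _ _ id (mem_powerset.mp hT))
        rw [polyMoebius_of_squarefree hsq, normalizedFactors_prod_of_irreducible_monic (hirr T hT)]
        rfl
    _ = 0 := sum_powerset_neg_one_pow_card_of_nonempty <| nonempty_iff_ne_empty.mpr
        fun h => hdeg (natDegree_eq_zero_of_isUnit ((primeFactors_eq_empty_iff hf.ne_zero).mp h))

end Moebius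

section CoeffSum

variable {F : Type*} [Field F] [Fintype F]

theorem coeffSum_eq_sum_monicsOfDegree (w : F[X] → ℤ) (n : ℕ) :
    coeffSum w n = ∑ f ∈ monicsOfDegree F n, w f := by
  rw [coeffSum, ← finsum_mem_coe_finset, monicsOfDegree, Set.Finite.coe_toFinset]

theorem sum_antidiagonal_coeffSum_mul_coeffSum (u v : F[X] → ℤ) (n : ℕ) :
    ∑ k ∈ antidiagonal n, coeffSum u k.1 * coeffSum v k.2 =
      ∑ f ∈ monicsOfDegree F n, ∑ d ∈ monicDivisors f, u d * v (f / d) := by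
  simp_rw [coeffSum_eq_sum_monicsOfDegree, sum_mul_sum, ← sum_product']
  rw [sum_sigma', sum_sigma']
  refine sum_nbij' (fun x => ⟨x.2.1 * x.2.2, x.2.1⟩)
    (fun y => ⟨(y.2.natDegree, (y.1 / y.2).natDegree), (y.2, y.1 / y.2)⟩) ?_ ?_ ?_ ?_ ?_
  · rintro ⟨⟨a, b⟩, d, e⟩ hx
    simp only [mem_sigma, HasAntidiagonal.mem_antidiagonal, mem_product,
      mem_monicsOfDegree] at hx ⊢
    obtain ⟨hab, ⟨hd, rfl⟩, he, rfl⟩ := hx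
    exact ⟨⟨hd.mul he, by rw [hd.natDegree_mul he, hab]⟩,
      (mem_monicDivisors (hd.mul he).ne_zero).mpr ⟨hd, dvd_mul_right d e⟩⟩
  · rintro ⟨f, d⟩ hy
    simp only [mem_sigma, mem_monicsOfDegree] at hy
    obtain ⟨⟨hf, rfl⟩, hdf⟩ := hy
    obtain ⟨hd, hdf⟩ := (mem_monicDivisors hf.ne_zero).mp hdf
    have hde : d * (f / d) = f := EuclideanDomain.mul_div_cancel' hd.ne_zero hdf
    have he : (f / d).Monic := hd.of_mul_monic_left (by rwa [hde])
    simp only [mem_sigma, HasAntidiagonal.mem_antidiagonal, mem_product,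
      mem_monicsOfDegree, and_true]
    exact ⟨by rw [← hd.natDegree_mul he, hde], hd, he⟩
  · rintro ⟨⟨a, b⟩, d, e⟩ hx
    simp only [mem_sigma, mem_product, mem_monicsOfDegree] at hx
    simp only [mul_div_cancel_left₀ _ hx.2.1.1.ne_zero, hx.2.1.2, hx.2.2.2]
  · rintro ⟨f, d⟩ hy
    simp only [mem_sigma, mem_monicsOfDegree] at hy
    obtain ⟨hd, hdf⟩ := (mem_monicDivisors hy.1.1.ne_zero).mp hy.2
    simp only [EuclideanDomain.mul_div_cancel' hd.ne_zero hdf]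
  · rintro ⟨⟨a, b⟩, d, e⟩ hx
    simp only [mem_sigma, mem_product, mem_monicsOfDegree] at hx
    simp only [mul_div_cancel_left₀ _ hx.2.1.1.ne_zero]

theorem mk_coeffSum_polyMoebius_mul_mk_coeffSum {χ : F[X] → ℤ} (hχ1 : χ 1 = 1)
    (hχmul : ∀ f g, χ (f * g) = χ f * χ g) :
    PowerSeries.mk (coeffSum fun f => polyMoebius f * χ f) * PowerSeries.mk (coeffSum χ) = 1 := by
  ext n
  rw [PowerSeries.coeff_mul, PowerSeries.coeff_one]
  simp only [PowerSeries.coeff_mk]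
  rcases Nat.eq_zero_or_pos n with rfl | hn
  · simp [coeffSum_eq_sum_monicsOfDegree, monicsOfDegree_zero, polyMoebius_one, hχ1]
  rw [sum_antidiagonal_coeffSum_mul_coeffSum, if_neg hn.ne']
  refine sum_eq_zero fun f hf => ?_
  obtain ⟨hfm, rfl⟩ := mem_monicsOfDegree.mp hf
  calc ∑ d ∈ monicDivisors f, polyMoebius d * χ d * χ (f / d)
      = (∑ d ∈ monicDivisors f, polyMoebius d) * χ f := by
        rw [sum_mul]
        refine sum_congr rfl fun d hd => ?_
        obtain ⟨hd, hdf⟩ := (mem_monicDivisors hfm.ne_zero).mp hd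
        rw [mul_assoc, ← hχmul, EuclideanDomain.mul_div_cancel' hd.ne_zero hdf]
    _ = 0 := by rw [sum_polyMoebius_monicDivisors hfm hn.ne', zero_mul]

end CoeffSum

theorem PowerSeries.mk_pow_mul_one_sub_C_mul_X {R : Type*} [CommRing R] (a : R) :
    mk (a ^ ·) * (1 - C a * X) = 1 := by
  simpa [rescale_mk, rescale_X] using congrArg (rescale a) (mk_one_mul_one_sub_eq_one R)

theorem Lagrange.basisDivisor_inv_inv {K : Type*} [Field K] {a b : K} (ha : a ≠ 0) (hb : b ≠ 0) :
    basisDivisor a⁻¹ b⁻¹ = C (a / (a - b)) * (1 - C b * X) := by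
  have hinv : (a⁻¹ - b⁻¹)⁻¹ = -(a / (a - b) * b) := by
    rcases eq_or_ne a b with rfl | hab
    · simp
    field_simp [sub_ne_zero.mpr hab, sub_ne_zero.mpr hab.symm]
    ring
  have hbb : C b * C b⁻¹ = (1 : K[X]) := by rw [← C_mul, mul_inv_cancel₀ hb, C_1]
  rw [basisDivisor, hinv, C_neg, C_mul]
  linear_combination C (a / (a - b)) * hbb

theorem Lagrange.basis_univ_inv {K ι : Type*} [Field K] [Fintype ι] [DecidableEq ι] {β : ι → K}
    (hβ0 : ∀ r, β r ≠ 0) (r : ι) :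
    Lagrange.basis univ (fun s => (β s)⁻¹) r =
      C (∏ s ∈ univ.erase r, β r / (β r - β s)) * ∏ s ∈ univ.erase r, (1 - C (β s) * X) := by
  rw [Lagrange.basis, map_prod, ← prod_mul_distrib]
  exact prod_congr rfl fun s _ => basisDivisor_inv_inv (hβ0 r) (hβ0 s)

theorem PowerSeries.mk_sum_mul_pow_mul_prod_one_sub_C_mul_X {K ι : Type*} [Field K] [Fintype ι]
    [DecidableEq ι] [Nonempty ι] {β : ι → K} (hβ0 : ∀ r, β r ≠ 0) (hβ : Function.Injective β) :
    mk (fun n => ∑ r, (∏ s ∈ univ.erase r, β r / (β r - β s)) * β r ^ n) *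
      ((∏ r, (1 - Polynomial.C (β r) * Polynomial.X) : K[X]) : PowerSeries K) = 1 := by
  have hmk : mk (fun n => ∑ r, (∏ s ∈ univ.erase r, β r / (β r - β s)) * β r ^ n) =
      ∑ r, C (∏ s ∈ univ.erase r, β r / (β r - β s)) * mk (β r ^ ·) := by
    ext n
    simp [map_sum, coeff_C_mul]
  have hbasis : ∑ r, Lagrange.basis univ (fun s => (β s)⁻¹) r = 1 :=
    Lagrange.sum_basis (inv_injective.comp hβ).injOn univ_nonempty
  rw [hmk, sum_mul]
  calc _ = ∑ r, ((Lagrange.basis univ (fun s => (β s)⁻¹) r : K[X]) : PowerSeries K) := by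
        refine sum_congr rfl fun r _ => ?_
        rw [Lagrange.basis_univ_inv hβ0, ← mul_prod_erase univ _ (mem_univ r), Polynomial.coe_mul,
          Polynomial.coe_mul, Polynomial.coe_C, mul_assoc, ← mul_assoc (mk _)]
        push_cast
        rw [mk_pow_mul_one_sub_C_mul_X, one_mul]
    _ = 1 := by simpa using congrArg (coeToPowerSeries.ringHom (R := K)) hbasis

theorem Polynomial.coe_sum_range_C_mul_X_pow {R : Type*} [CommSemiring R] {c : ℕ → R} {M : ℕ}
    (hc : ∀ n, M ≤ n → c n = 0) :
    ((∑ n ∈ range M, C (c n) * X ^ n : R[X]) : PowerSeries R) = PowerSeries.mk c := by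
  ext n
  simp only [coeff_coe, finsetSum_coeff, coeff_C_mul_X_pow, sum_ite_eq, mem_range,
    PowerSeries.coeff_mk]
  exact (ite_eq_left_iff.mpr fun h => (hc n (not_lt.mp h)).symm)

theorem coeffSum_polyMoebius_mul_eq_sum {F K ι : Type*} [Field F] [Fintype F] [Field K]
    [Fintype ι] [DecidableEq ι] [Nonempty ι] {χ : F[X] → ℤ} (hχ1 : χ 1 = 1)
    (hχmul : ∀ f g, χ (f * g) = χ f * χ g) {M : ℕ} (hvanish : ∀ n, M ≤ n → coeffSum χ n = 0)
    {β : ι → K} (hβ0 : ∀ r, β r ≠ 0) (hβ : Function.Injective β)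
    (hL : ∑ n ∈ range M, C (coeffSum χ n : K) * X ^ n = ∏ r, (1 - C (β r) * X)) (n : ℕ) :
    (coeffSum (fun f => polyMoebius f * χ f) n : K) =
      ∑ r, (∏ s ∈ univ.erase r, β r / (β r - β s)) * β r ^ n := by
  set P : PowerSeries K := ((∏ r, (1 - C (β r) * X) : K[X]) : PowerSeries K) with hPdef
  have hP : P = PowerSeries.map (Int.castRingHom K) (PowerSeries.mk (coeffSum χ)) := by
    rw [hPdef, ← hL, coe_sum_range_C_mul_X_pow fun n hn => by rw [hvanish n hn, Int.cast_zero]]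
    ext n
    simp
  have hbP : PowerSeries.map (Int.castRingHom K)
      (PowerSeries.mk (coeffSum fun f => polyMoebius f * χ f)) * P = 1 := by
    rw [hP, ← map_mul, mk_coeffSum_polyMoebius_mul_mk_coeffSum hχ1 hχmul, map_one]
  have hPE := PowerSeries.mk_sum_mul_pow_mul_prod_one_sub_C_mul_X hβ0 hβ
  rw [mul_comm] at hPE
  simpa using congrArg (PowerSeries.coeff n) (left_inv_eq_right_inv hbP hPE)

theorem Polynomial.one_sub_C_mul_X_mul_one_sub_C_mul_X {R : Type*} [CommRing R] (u v : R) :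
    (1 - C u * X) * (1 - C v * X) = 1 - C (u + v) * X + C (u * v) * X ^ 2 := by
  rw [C_add, C_mul]
  ring

namespace Complex

open ComplexConjugate

theorem map_one_sub_C_two_sqrt_mul_cos_eq_mul {q : ℝ} (hq : 0 ≤ q) (θ : ℝ) :
    (1 - C (2 * √q * Real.cos θ) * X + C q * X ^ 2 : ℝ[X]).map (algebraMap ℝ ℂ) =
      (1 - C (√q * exp (θ * I)) * X) * (1 - C (√q * exp (-θ * I)) * X) := by
  have hsum : √q * exp (θ * I) + √q * exp (-θ * I) = algebraMap ℝ ℂ (2 * √q * Real.cos θ) := by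
    rw [← mul_add, ← two_cos, coe_algebraMap]
    push_cast
    ring
  have hprod : √q * exp (θ * I) * (√q * exp (-θ * I)) = algebraMap ℝ ℂ q := by
    rw [mul_mul_mul_comm, ← exp_add, ← ofReal_mul, Real.mul_self_sqrt hq, neg_mul, add_neg_cancel,
      exp_zero, mul_one, coe_algebraMap]
  rw [one_sub_C_mul_X_mul_one_sub_C_mul_X, hsum, hprod]
  simp only [Polynomial.map_add, Polynomial.map_sub, Polynomial.map_mul, Polynomial.map_one,
    Polynomial.map_pow, map_C, map_X]

theorem arg_ofReal_mul_exp_mul_I {r t : ℝ} (hr : 0 < r)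
    (ht : t ∈ Set.Ioc (-Real.pi) Real.pi) : arg (r * exp (t * I)) = t := by
  rw [arg_real_mul _ hr, arg_exp_mul_I, toIocMod_eq_self]
  simpa [two_mul, ← sub_eq_add_neg] using ht

theorem injective_sumElim_mul_exp_mul_I {ι : Type*} {r : ℝ} (hr : 0 < r) {θ : ι → ℝ}
    (hθ : Function.Injective θ) (hθmem : ∀ j, θ j ∈ Set.Ioo 0 Real.pi) :
    Function.Injective
      (Sum.elim (fun j => (r : ℂ) * exp (θ j * I)) fun j => (r : ℂ) * exp (-θ j * I)) := by
  have harg : ∀ j, arg (r * exp (θ j * I)) = θ j ∧ arg (r * exp (-θ j * I)) = -θ j := fun j =>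
    ⟨arg_ofReal_mul_exp_mul_I hr ⟨by linarith [(hθmem j).1, Real.pi_pos], (hθmem j).2.le⟩, by
      simpa using arg_ofReal_mul_exp_mul_I hr (t := -θ j)
        ⟨neg_lt_neg (hθmem j).2, by linarith [(hθmem j).1, Real.pi_pos]⟩⟩
  refine Function.Injective.sumElim (fun a b h => hθ ?_) (fun a b h => hθ ?_) fun a b h => ?_
  · simpa only [(harg a).1, (harg b).1] using congrArg arg h
  · simpa only [(harg a).2, (harg b).2, neg_inj] using congrArg arg h
  · have := congrArg arg h
    rw [(harg a).1, (harg b).2] at this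
    linarith [(hθmem a).1, (hθmem b).1]

theorem ofReal_mul_exp_mul_I_pow (r t : ℝ) (n : ℕ) :
    ((r : ℂ) * exp (t * I)) ^ n = ((r ^ n : ℝ) : ℂ) * exp ((n * t : ℝ) * I) := by
  rw [mul_pow, ← exp_nat_mul, ofReal_pow, ofReal_mul, ofReal_natCast, mul_assoc]

theorem re_mul_exp_add_re_mul_exp_neg (a b : ℂ) (t : ℝ) :
    (a * exp (t * I)).re + (b * exp (-t * I)).re =
      ‖a + conj b‖ * Real.cos (t + arg (a + conj b)) := by
  have hconj : (b * exp (-t * I)).re = (conj b * exp (t * I)).re := by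
    rw [← conj_re, map_mul, ← exp_conj]
    simp
  rw [hconj, ← add_re, ← add_mul]
  nth_rewrite 1 [← norm_mul_exp_arg_mul_I (a + conj b)]
  rw [mul_assoc, ← exp_add, ← add_mul, ← ofReal_add, re_ofReal_mul, exp_ofReal_mul_I_re,
    add_comm (arg _) t]

theorem re_sum_mul_sumElim_pow {ι : Type*} [Fintype ι] (A : ι ⊕ ι → ℂ) (r : ℝ)
    (θ : ι → ℝ) (n : ℕ) :
    (∑ s, A s * Sum.elim (fun j => (r : ℂ) * exp (θ j * I))
        (fun j => (r : ℂ) * exp (-θ j * I)) s ^ n).re =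
      r ^ n * ∑ j, ‖A (.inl j) + conj (A (.inr j))‖ *
        Real.cos (n * θ j + arg (A (.inl j) + conj (A (.inr j)))) := by
  rw [re_sum, Fintype.sum_sum_type, ← sum_add_distrib, mul_sum]
  refine sum_congr rfl fun j _ => ?_
  rw [← re_mul_exp_add_re_mul_exp_neg]
  simp only [Sum.elim_inl, Sum.elim_inr, ← ofReal_neg, ofReal_mul_exp_mul_I_pow,
    mul_left_comm (A _), re_ofReal_mul]
  push_cast
  ring_nf

end Complex

open Complex ComplexConjugate in
theorem muBias_trigonometric_form_odd_general {F : Type*} [Field F] [Fintype F]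
    (m : Polynomial F) (hM3 : 3 ≤ m.natDegree)
    (χ : Polynomial F → ℤ) (hχ1 : χ 1 = 1) (hχmul : ∀ f g, χ (f * g) = χ f * χ g)
    (θ : Fin ((m.natDegree - 1) / 2) → ℝ) (hθinj : Function.Injective θ)
    (hθmem : ∀ j, θ j ∈ Set.Ioo 0 Real.pi)
    (hvanish : ∀ n, m.natDegree ≤ n → coeffSum χ n = 0)
    (hfact : (∑ n ∈ Finset.range m.natDegree,
          Polynomial.C ((coeffSum χ n : ℤ) : ℝ) * Polynomial.X ^ n) =
        ∏ j, (1 - Polynomial.C (2 * Real.sqrt (Fintype.card F) * Real.cos (θ j)) * Polynomial.X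
          + Polynomial.C ((Fintype.card F : ℝ)) * Polynomial.X ^ 2)) :
    ∃ γ φ : Fin ((m.natDegree - 1) / 2) → ℝ, ∀ n : ℕ, 1 ≤ n →
      ((coeffSum (fun f => polyMoebius f * χ f) n : ℤ) : ℝ) =
        (Fintype.card F : ℝ) ^ ((n : ℝ) / 2) *
          ∑ j, γ j * Real.sin (n * θ j + φ j) := by
  set q : ℝ := (Fintype.card F : ℝ)
  have hq : 0 < q := Nat.cast_pos.mpr Fintype.card_pos
  have : Nonempty (Fin ((m.natDegree - 1) / 2)) := ⟨⟨0, by omega⟩⟩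
  set β := Sum.elim (fun j => (√q : ℂ) * exp (θ j * I)) fun j => (√q : ℂ) * exp (-θ j * I)
  have hL : ∑ n ∈ range m.natDegree, C (coeffSum χ n : ℂ) * X ^ n = ∏ r, (1 - C (β r) * X) := by
    have hmap := congrArg (Polynomial.map (algebraMap ℝ ℂ)) hfact
    simp only [Polynomial.map_prod, map_one_sub_C_two_sqrt_mul_cos_eq_mul hq.le, Polynomial.map_sum,
      Polynomial.map_mul, Polynomial.map_pow, map_C, map_X, coe_algebraMap, ofReal_intCast] at hmap
    rw [hmap, Fintype.prod_sum_type, ← prod_mul_distrib]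
    rfl
  have hβ0 : ∀ r, β r ≠ 0 := by
    rintro (j | j) <;>
      exact mul_ne_zero (ofReal_ne_zero.mpr (Real.sqrt_pos.mpr hq).ne') (exp_ne_zero _)
  have hb := coeffSum_polyMoebius_mul_eq_sum hχ1 hχmul hvanish hβ0
    (injective_sumElim_mul_exp_mul_I (Real.sqrt_pos.mpr hq) hθinj hθmem) hL
  set A := fun r => ∏ s ∈ univ.erase r, β r / (β r - β s)
  set w := fun j => A (.inl j) + conj (A (.inr j))
  refine ⟨fun j => ‖w j‖, fun j => arg (w j) + Real.pi / 2, fun n _ => ?_⟩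
  calc ((coeffSum (fun f => polyMoebius f * χ f) n : ℤ) : ℝ)
      = (∑ r, A r * β r ^ n).re := by exact_mod_cast congrArg re (hb n)
    _ = √q ^ n * ∑ j, ‖w j‖ * Real.cos (n * θ j + arg (w j)) := re_sum_mul_sumElim_pow A √q θ n
    _ = q ^ ((n : ℝ) / 2) * ∑ j, ‖w j‖ * Real.sin (n * θ j + (arg (w j) + Real.pi / 2)) := by
        simp only [Real.rpow_div_two_eq_sqrt _ hq.le, Real.rpow_natCast, ← add_assoc,
          Real.sin_add_pi_div_two]

/-- For a quadratic character `χ` modulo a monic `m` of odd degree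
`M ≥ 3` over `F_q` (`q` odd), assuming the factorization of `ℒ(u,χ)` with inverse zeros
`√q e^{±iθ_j}`, the bias `b^μ(n)` is `q^{n/2} ∑_j γ_j sin(nθ_j + φ_j)` for all `n ≥ 1`. -/
theorem muBias_trigonometric_form_odd {F : Type*} [Field F] [Fintype F]
    (hq : Odd (Fintype.card F))
    (m : Polynomial F) (hm : m.Monic) (hModd : Odd m.natDegree) (hM3 : 3 ≤ m.natDegree)
    (χ : Polynomial F → ℤ) (hχ1 : χ 1 = 1) (hχmul : ∀ f g, χ (f * g) = χ f * χ g)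
    (hχ0 : ∀ f, ¬ IsCoprime f m → χ f = 0) (hχsq : ∀ f, IsCoprime f m → χ f ^ 2 = 1)
    (θ : Fin ((m.natDegree - 1) / 2) → ℝ) (hθinj : Function.Injective θ)
    (hθmem : ∀ j, θ j ∈ Set.Ioo 0 Real.pi)
    (hvanish : ∀ n, m.natDegree ≤ n → coeffSum χ n = 0)
    (hfact : (∑ n ∈ Finset.range m.natDegree,
          Polynomial.C ((coeffSum χ n : ℤ) : ℝ) * Polynomial.X ^ n) =
        ∏ j, (1 - Polynomial.C (2 * Real.sqrt (Fintype.card F) * Real.cos (θ j)) * Polynomial.X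
          + Polynomial.C ((Fintype.card F : ℝ)) * Polynomial.X ^ 2)) :
    ∃ γ φ : Fin ((m.natDegree - 1) / 2) → ℝ, ∀ n : ℕ, 1 ≤ n →
      ((coeffSum (fun f => polyMoebius f * χ f) n : ℤ) : ℝ) =
        (Fintype.card F : ℝ) ^ ((n : ℝ) / 2) *
          ∑ j, γ j * Real.sin (n * θ j + φ j) :=
  muBias_trigonometric_form_odd_general m hM3 χ hχ1 hχmul θ hθinj hθmem hvanish hfact
end

section
/- Let F be a finite field with q elements, q odd, A = F[T], and let m = m_1 ⋯ m_r ∈ A be monic squarefree of degree M ≥ 3 with distinct monic irreducible factors m_i of degrees M_i. Let χ : A → ℤ be completely multiplicative with χ(f) = 0 whenever f is not coprime to m and χ(f)² = 1 whenever f is coprime to m, and set c(n) = ∑_{f monic, deg f = n} χ(f) and L = ∑_{n=0}^{M−1} c(n)·q^{−n/2}. Suppose θ_1, …, θ_{M'} ∈ (0, π) satisfy c(n) = 0 for n ≥ M and, as real polynomials, ∑_{n=0}^{M−1} c(n) X^n = ∏_{j=1}^{M'}(1 − 2√q·cos(θ_j)·X + q X²) with M' = (M−1)/2 if M is odd, respectively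 ∑_{n=0}^{M−1} c(n) X^n = (1 − X)·∏_{j=1}^{M'}(1 − 2√q·cos(θ_j)·X + q X²) with M' = (M−2)/2 if M is even. Set e_even = ½(∏_{j}(1 + cos θ_j) + ∏_{j}(1 − cos θ_j)) and e_odd = ½(∏_{j}(1 + cos θ_j) − ∏_{j}(1 − cos θ_j)). Then (∏_{i=1}^{r}(1 − q^{−M_i}) / (2^{M'} ∏_{j=1}^{M'} sin²θ_j))·(e_even + e_odd) equals ∏_{i=1}^{r}(1 − q^{−M_i}) / L if M is odd, and equals (1 − q^{−1/2})·∏_{i=1}^{r}(1 − q^{−M_i}) / L if M is even. -/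
/-!
Since `e_even + e_odd = ∏ (1 + cos θ_j)` and `sin² θ_j = (1 - cos θ_j)(1 + cos θ_j)`, the left-hand
side equals `∏ (1 - q^{-M_i}) / (2^{M'} ∏ (1 - cos θ_j))`. On the other hand `L` is the value of
`∑ c(n) Xⁿ` at `X = q^{-1/2}`, where each factor `1 - 2√q cos θ X + q X²` takes the value
`2 (1 - cos θ)` and the extra factor `1 - X` of the even case the value `1 - q^{-1/2}`.
-/

open Polynomial
open scoped Classical

/-- `e_even`: the sum of the even-index elementary symmetric polynomials in
`cos θ_1, …, cos θ_d`, i.e. `½(∏(1 + cos θ_j) + ∏(1 − cos θ_j))`. -/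
noncomputable def eEven {d : ℕ} (θ : Fin d → ℝ) : ℝ :=
  ((∏ j, (1 + Real.cos (θ j))) + ∏ j, (1 - Real.cos (θ j))) / 2

/-- `e_odd`: the sum of the odd-index elementary symmetric polynomials in
`cos θ_1, …, cos θ_d`, i.e. `½(∏(1 + cos θ_j) − ∏(1 − cos θ_j))`. -/
noncomputable def eOdd {d : ℕ} (θ : Fin d → ℝ) : ℝ :=
  ((∏ j, (1 + Real.cos (θ j))) - ∏ j, (1 - Real.cos (θ j))) / 2

/-- The constant `C_m = ∏_{i=1}^r (1 − q^{−M_i}) / (2^{M'} ∏_{j=1}^{M'} sin² θ_j)`. -/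
noncomputable def biasConst {d r : ℕ} (q : ℕ) (Mi : Fin r → ℕ) (θ : Fin d → ℝ) : ℝ :=
  (∏ i, (1 - (q : ℝ) ^ (-(Mi i : ℤ)))) / (2 ^ d * ∏ j, Real.sin (θ j) ^ 2)

lemma eEven_add_eOdd {d : ℕ} (θ : Fin d → ℝ) :
    eEven θ + eOdd θ = ∏ j, (1 + Real.cos (θ j)) := by
  unfold eEven eOdd
  ring

lemma prod_sin_sq_eq_prod_one_sub_cos_mul_prod_one_add_cos {ι : Type*} (s : Finset ι)
    (θ : ι → ℝ) :
    ∏ j ∈ s, Real.sin (θ j) ^ 2 =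
      (∏ j ∈ s, (1 - Real.cos (θ j))) * ∏ j ∈ s, (1 + Real.cos (θ j)) := by
  rw [← Finset.prod_mul_distrib]
  refine Finset.prod_congr rfl fun j _ => ?_
  linear_combination Real.sin_sq (θ j)

lemma one_add_cos_ne_zero_of_mem_Ioo {θ : ℝ} (hθ : θ ∈ Set.Ioo 0 Real.pi) :
    1 + Real.cos θ ≠ 0 := by
  intro h
  have hsin : Real.sin θ ^ 2 = (1 - Real.cos θ) * (1 + Real.cos θ) := by
    linear_combination Real.sin_sq θ
  rw [h, mul_zero] at hsin
  exact (Real.sin_pos_of_pos_of_lt_pi hθ.1 hθ.2).ne' (pow_eq_zero_iff two_ne_zero |>.1 hsin)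

lemma biasConst_mul_eEven_add_eOdd {d r : ℕ} (q : ℕ) (Mi : Fin r → ℕ) (θ : Fin d → ℝ)
    (hθ : ∀ j, θ j ∈ Set.Ioo 0 Real.pi) :
    biasConst q Mi θ * (eEven θ + eOdd θ) =
      (∏ i, (1 - (q : ℝ) ^ (-(Mi i : ℤ)))) / (2 ^ d * ∏ j, (1 - Real.cos (θ j))) := by
  have hE : ∏ j, (1 + Real.cos (θ j)) ≠ 0 :=
    Finset.prod_ne_zero_iff.2 fun j _ => one_add_cos_ne_zero_of_mem_Ioo (hθ j)
  rw [biasConst, eEven_add_eOdd, prod_sin_sq_eq_prod_one_sub_cos_mul_prod_one_add_cos,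
    ← mul_assoc, div_mul_eq_mul_div, mul_div_mul_right _ _ hE]

lemma Real.rpow_neg_natCast_div_two {q : ℝ} (hq : 0 ≤ q) (n : ℕ) :
    q ^ (-(n : ℝ) / 2) = (√q)⁻¹ ^ n := by
  rw [inv_pow, ← Real.rpow_natCast, Real.sqrt_eq_rpow, ← Real.rpow_mul hq, ← Real.rpow_neg hq]
  ring_nf

lemma sum_mul_rpow_neg_div_two_eq_eval {q : ℝ} (hq : 0 ≤ q) (c : ℕ → ℝ) (N : ℕ) :
    ∑ n ∈ Finset.range N, c n * q ^ (-(n : ℝ) / 2) =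
      (∑ n ∈ Finset.range N, C (c n) * X ^ n).eval (√q)⁻¹ := by
  simp [eval_finsetSum, Real.rpow_neg_natCast_div_two hq]

lemma eval_inv_sqrt_quadFactor {q : ℝ} (hq : 0 < q) (a : ℝ) :
    (1 - C (2 * √q * a) * X + C q * X ^ 2).eval (√q)⁻¹ = 2 * (1 - a) := by
  have hs : √q ≠ 0 := (Real.sqrt_pos.2 hq).ne'
  simp only [eval_add, eval_sub, eval_one, eval_mul, eval_C, eval_X, eval_pow]
  field_simp
  rw [Real.sq_sqrt hq.le]
  ring

lemma eval_inv_sqrt_prod_quadFactor {q : ℝ} (hq : 0 < q) {d : ℕ} (θ : Fin d → ℝ) :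
    (∏ j, (1 - C (2 * √q * Real.cos (θ j)) * X + C q * X ^ 2)).eval (√q)⁻¹ =
      2 ^ d * ∏ j, (1 - Real.cos (θ j)) := by
  simp only [eval_prod, eval_inv_sqrt_quadFactor hq, Finset.prod_mul_distrib, Finset.prod_const,
    Finset.card_univ, Fintype.card_fin]

theorem biasConst_eq_central_L_value_general {F : Type*} [Field F] [Fintype F]
    (r : ℕ) (mi : Fin r → Polynomial F)
    (m : Polynomial F)
    (χ : Polynomial F → ℤ)
    (M' : ℕ) (θ : Fin M' → ℝ) (hθmem : ∀ j, θ j ∈ Set.Ioo 0 Real.pi)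
    (hcase :
      (Odd m.natDegree ∧ M' = (m.natDegree - 1) / 2 ∧
        (∑ n ∈ Finset.range m.natDegree,
            Polynomial.C ((coeffSum χ n : ℤ) : ℝ) * Polynomial.X ^ n) =
          ∏ j, (1 - Polynomial.C (2 * Real.sqrt (Fintype.card F) * Real.cos (θ j)) * Polynomial.X
            + Polynomial.C ((Fintype.card F : ℝ)) * Polynomial.X ^ 2)) ∨
      (Even m.natDegree ∧ M' = (m.natDegree - 2) / 2 ∧
        (∑ n ∈ Finset.range m.natDegree,
            Polynomial.C ((coeffSum χ n : ℤ) : ℝ) * Polynomial.X ^ n) =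
          (1 - Polynomial.X) *
            ∏ j, (1 - Polynomial.C (2 * Real.sqrt (Fintype.card F) * Real.cos (θ j)) *
              Polynomial.X + Polynomial.C ((Fintype.card F : ℝ)) * Polynomial.X ^ 2))) :
    biasConst (Fintype.card F) (fun i => (mi i).natDegree) θ * (eEven θ + eOdd θ) =
      (if Odd m.natDegree then (1 : ℝ) else 1 - (Real.sqrt (Fintype.card F))⁻¹) *
        (∏ i, (1 - (Fintype.card F : ℝ) ^ (-((mi i).natDegree : ℤ)))) /
        (∑ n ∈ Finset.range m.natDegree,
          ((coeffSum χ n : ℤ) : ℝ) * (Fintype.card F : ℝ) ^ (-(n : ℝ) / 2)) := by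
  have hq : (0 : ℝ) < Fintype.card F := Nat.cast_pos.2 Fintype.card_pos
  rw [biasConst_mul_eEven_add_eOdd _ _ _ hθmem, sum_mul_rpow_neg_div_two_eq_eval hq.le]
  rcases hcase with ⟨hodd, -, hL⟩ | ⟨heven, -, hL⟩
  · rw [if_pos hodd, hL, eval_inv_sqrt_prod_quadFactor hq, one_mul]
  · have hs : 1 - (√(Fintype.card F : ℝ))⁻¹ ≠ 0 := by
      rw [sub_ne_zero, ne_comm, inv_ne_one, Ne, Real.sqrt_eq_one]
      exact_mod_cast Fintype.one_lt_card.ne'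
    rw [if_neg (Nat.not_odd_iff_even.2 heven), hL, eval_mul, eval_inv_sqrt_prod_quadFactor hq,
      eval_sub, eval_one, eval_X, mul_div_mul_left _ _ hs]

/-- (Bias constant and the central L-value.)
`C_m·(e_even + e_odd) = ∏_i(1 − q^{−M_i}) / ℒ(q^{−1/2}, χ)` for odd `M`, and
`C_m·(e_even + e_odd) = (1 − q^{−1/2})·∏_i(1 − q^{−M_i}) / ℒ(q^{−1/2}, χ)` for even `M`. -/
theorem biasConst_eq_central_L_value {F : Type*} [Field F] [Fintype F]
    (hq : Odd (Fintype.card F))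
    (r : ℕ) (mi : Fin r → Polynomial F) (hmonic : ∀ i, (mi i).Monic)
    (hirr : ∀ i, Irreducible (mi i)) (hinj : Function.Injective mi)
    (m : Polynomial F) (hm : m = ∏ i, mi i) (hM3 : 3 ≤ m.natDegree)
    (χ : Polynomial F → ℤ) (hχ1 : χ 1 = 1) (hχmul : ∀ f g, χ (f * g) = χ f * χ g)
    (hχ0 : ∀ f, ¬ IsCoprime f m → χ f = 0) (hχsq : ∀ f, IsCoprime f m → χ f ^ 2 = 1)
    (M' : ℕ) (θ : Fin M' → ℝ) (hθmem : ∀ j, θ j ∈ Set.Ioo 0 Real.pi)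
    (hvanish : ∀ n, m.natDegree ≤ n → coeffSum χ n = 0)
    (hcase :
      (Odd m.natDegree ∧ M' = (m.natDegree - 1) / 2 ∧
        (∑ n ∈ Finset.range m.natDegree,
            Polynomial.C ((coeffSum χ n : ℤ) : ℝ) * Polynomial.X ^ n) =
          ∏ j, (1 - Polynomial.C (2 * Real.sqrt (Fintype.card F) * Real.cos (θ j)) * Polynomial.X
            + Polynomial.C ((Fintype.card F : ℝ)) * Polynomial.X ^ 2)) ∨
      (Even m.natDegree ∧ M' = (m.natDegree - 2) / 2 ∧
        (∑ n ∈ Finset.range m.natDegree,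
            Polynomial.C ((coeffSum χ n : ℤ) : ℝ) * Polynomial.X ^ n) =
          (1 - Polynomial.X) *
            ∏ j, (1 - Polynomial.C (2 * Real.sqrt (Fintype.card F) * Real.cos (θ j)) *
              Polynomial.X + Polynomial.C ((Fintype.card F : ℝ)) * Polynomial.X ^ 2))) :
    biasConst (Fintype.card F) (fun i => (mi i).natDegree) θ * (eEven θ + eOdd θ) =
      (if Odd m.natDegree then (1 : ℝ) else 1 - (Real.sqrt (Fintype.card F))⁻¹) *
        (∏ i, (1 - (Fintype.card F : ℝ) ^ (-((mi i).natDegree : ℤ)))) /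
        (∑ n ∈ Finset.range m.natDegree,
          ((coeffSum χ n : ℤ) : ℝ) * (Fintype.card F : ℝ) ^ (-(n : ℝ) / 2)) :=
  biasConst_eq_central_L_value_general r mi m χ M' θ hθmem hcase
end
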